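/- arXiv:1710.01458 — 4 statements merged into one kernel-verified Lean document; each statement's English description precedes it below -/
import Mathlib

section
/- For nonnegative functions f, g, h on a finite set S ⊆ ℤ³ (Loomis–Whitney in dimension 3): ∑_{(x,y,z)} f(y,z) g(x,z) h(x,y) ≤ (∑ f²)^{1/2} (∑ g²)^{1/2} (∑ h²)^{1/2}, where the left sum is over all (x,y,z) ∈ A×B×C and the right sums are over B×C, A×C, A×B respectively. -/
open Finset

lemma nnreal_cs {ι : Type*} (s : Finset ι) (f g : ι → NNReal) :
    ∑ i ∈ s, f i * g i ≤
      (∑ i ∈ s, f i ^ (2 : ℝ)) ^ ((1 : ℝ) / 2) * (∑ i ∈ s, g i ^ (2 : ℝ)) ^ ((1 : ℝ) / 2) := by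
  have h2 : ∀ (x : NNReal), x ^ (2 : ℝ) = x ^ 2 := by
    intro x
    rw [← NNReal.rpow_natCast x 2]
    norm_num
  simp only [h2, ← NNReal.sqrt_eq_rpow]
  exact NNReal.sum_mul_le_sqrt_mul_sqrt s f g

theorem loomis_whitney_3d (α β γ : Type*) (A : Finset α) (B : Finset β) (C : Finset γ)
    (f : β × γ → NNReal) (g : α × γ → NNReal) (h : α × β → NNReal) :
    ∑ x ∈ A, ∑ y ∈ B, ∑ z ∈ C, f (y, z) * g (x, z) * h (x, y) ≤
      (∑ w ∈ B ×ˢ C, f w ^ (2 : ℝ)) ^ ((1 : ℝ) / 2) *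
      (∑ w ∈ A ×ˢ C, g w ^ (2 : ℝ)) ^ ((1 : ℝ) / 2) *
      (∑ w ∈ A ×ˢ B, h w ^ (2 : ℝ)) ^ ((1 : ℝ) / 2) := by
  -- abbreviations
  set F : β → NNReal := fun y => ∑ z ∈ C, f (y, z) ^ (2 : ℝ) with hF
  set G : α → NNReal := fun x => ∑ z ∈ C, g (x, z) ^ (2 : ℝ) with hG
  have step1 : ∑ x ∈ A, ∑ y ∈ B, ∑ z ∈ C, f (y, z) * g (x, z) * h (x, y) ≤
      ∑ p ∈ A ×ˢ B, (F p.2) ^ ((1 : ℝ) / 2) * (G p.1) ^ ((1 : ℝ) / 2) * h p := by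
    rw [Finset.sum_product]
    refine Finset.sum_le_sum fun x hx => Finset.sum_le_sum fun y hy => ?_
    calc ∑ z ∈ C, f (y, z) * g (x, z) * h (x, y)
        = (∑ z ∈ C, f (y, z) * g (x, z)) * h (x, y) := by rw [Finset.sum_mul]
      _ ≤ (F y) ^ ((1 : ℝ) / 2) * (G x) ^ ((1 : ℝ) / 2) * h (x, y) := by
          exact mul_le_mul_left (nnreal_cs C (fun z => f (y, z)) (fun z => g (x, z))) _
  refine step1.trans ?_
  have step2 := nnreal_cs (A ×ˢ B)
      (fun p => (F p.2) ^ ((1 : ℝ) / 2) * (G p.1) ^ ((1 : ℝ) / 2)) h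
  refine step2.trans ?_
  have key : ∑ p ∈ A ×ˢ B, ((F p.2) ^ ((1 : ℝ) / 2) * (G p.1) ^ ((1 : ℝ) / 2)) ^ (2 : ℝ)
      = (∑ w ∈ B ×ˢ C, f w ^ (2 : ℝ)) * (∑ w ∈ A ×ˢ C, g w ^ (2 : ℝ)) := by
    have : ∀ p : α × β, ((F p.2) ^ ((1 : ℝ) / 2) * (G p.1) ^ ((1 : ℝ) / 2)) ^ (2 : ℝ)
        = F p.2 * G p.1 := by
      intro p
      rw [NNReal.mul_rpow, ← NNReal.rpow_mul, ← NNReal.rpow_mul]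
      norm_num
    simp only [this]
    calc ∑ p ∈ A ×ˢ B, F p.2 * G p.1
        = ∑ x ∈ A, ∑ y ∈ B, F y * G x := by rw [Finset.sum_product]
      _ = ∑ y ∈ B, ∑ x ∈ A, F y * G x := Finset.sum_comm
      _ = (∑ y ∈ B, F y) * ∑ x ∈ A, G x := (Finset.sum_mul_sum _ _ _ _).symm
      _ = (∑ w ∈ B ×ˢ C, f w ^ (2 : ℝ)) * (∑ w ∈ A ×ˢ C, g w ^ (2 : ℝ)) := by
          rw [Finset.sum_product, Finset.sum_product]
  rw [key, NNReal.mul_rpow]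
end

section
/- Let W, U be finite sets, V = W × U, and for each j let B_j split as B_j(w,u) = (B_j^W w, B_j^U u) with B_j^W : W → W_j and B_j^U : U → U_j. Define f_j^U : U_j → ℝ≥0 by f_j^U(u') = (∑_{w'∈W_j} f_j(w',u')^{1/p_j})^{p_j}. If the Brascamp–Lieb inequality with exponents p holds on W (for all nonnegative inputs) and on U (for all nonnegative inputs), then ∑_{(w,u)∈V} ∏_j f_j(B_j^W w, B_j^U u) ≤ ∏_j (∑_{(w',u')} f_j(w',u')^{1/p_j})^{p_j}. -/
theorem BL_fibering_step (m : ℕ) (W U : Type*) [Fintype W] [Fintype U]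
    (Wj Uj : Fin m → Type*) [∀ j, Fintype (Wj j)] [∀ j, Fintype (Uj j)]
    (BW : ∀ j : Fin m, W → Wj j) (BU : ∀ j : Fin m, U → Uj j)
    (f : ∀ j : Fin m, Wj j × Uj j → NNReal)
    (p : Fin m → ℝ) (hp : ∀ j, 0 < p j) (hp1 : ∀ j, p j ≤ 1)
    (hW : ∀ g : ∀ j : Fin m, Wj j → NNReal,
      ∑ w : W, ∏ j, g j (BW j w) ≤ ∏ j, (∑ w' : Wj j, g j w' ^ (1 / p j)) ^ (p j))
    (hU : ∀ g : ∀ j : Fin m, Uj j → NNReal,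
      ∑ u : U, ∏ j, g j (BU j u) ≤ ∏ j, (∑ u' : Uj j, g j u' ^ (1 / p j)) ^ (p j)) :
    ∑ w : W, ∑ u : U, ∏ j, f j (BW j w, BU j u) ≤
      ∏ j, (∑ w' : Wj j, ∑ u' : Uj j, f j (w', u') ^ (1 / p j)) ^ (p j) := by
  have key : ∀ j : Fin m, ∀ u' : Uj j,
      ((∑ w' : Wj j, f j (w', u') ^ (1 / p j)) ^ (p j)) ^ (1 / p j)
        = ∑ w' : Wj j, f j (w', u') ^ (1 / p j) := by
    intro j u'
    rw [← NNReal.rpow_mul, mul_one_div_cancel (hp j).ne', NNReal.rpow_one]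
  calc ∑ w : W, ∑ u : U, ∏ j, f j (BW j w, BU j u)
      = ∑ u : U, ∑ w : W, ∏ j, f j (BW j w, BU j u) := Finset.sum_comm
    _ ≤ ∑ u : U, ∏ j, (∑ w' : Wj j, f j (w', BU j u) ^ (1 / p j)) ^ (p j) :=
        Finset.sum_le_sum fun u _ => hW (fun j w' => f j (w', BU j u))
    _ ≤ ∏ j, (∑ u' : Uj j, ((∑ w' : Wj j, f j (w', u') ^ (1 / p j)) ^ (p j)) ^ (1 / p j)) ^ (p j) :=
        hU (fun j u' => (∑ w' : Wj j, f j (w', u') ^ (1 / p j)) ^ (p j))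
    _ = ∏ j, (∑ w' : Wj j, ∑ u' : Uj j, f j (w', u') ^ (1 / p j)) ^ (p j) := by
        refine Finset.prod_congr rfl fun j _ => ?_
        congr 1
        rw [Finset.sum_comm]
        exact Finset.sum_congr rfl fun u' _ => key j u'
end

section
/- Let V be a finite-dimensional vector space, B_j : V → V_j linear, and p ∈ [0,1]^m feasible (dim W ≥ ∑_j p_j dim B_j W for all subspaces W ≤ V, with equality for W = V). If W₀ is a subspace with dim W₀ = ∑_j p_j dim(B_j W₀), then for every subspace W̄ of V/W₀ (with induced maps B̄_j : V/W₀ → B_jV/B_jW₀), dim W̄ ≥ ∑_j p_j dim(B̄_j W̄). -/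
/-!
Pull `W'` back to `W = W'.comap W₀.mkQ ⊇ W₀`. Then `dim W' = dim W - dim W₀` and
`dim B̄ⱼ W' = dim Bⱼ W - dim Bⱼ W₀`, since `B̄ⱼ W'` is the image of `Bⱼ W` in `Bⱼ V / Bⱼ W₀`;
so the claim is the feasibility inequality at `W` minus the equality at `W₀`.
-/

open Module

namespace Submodule

variable {K V V₂ : Type*} [Field K] [AddCommGroup V] [Module K V] [AddCommGroup V₂] [Module K V₂]

theorem finrank_map_mkQ_add_finrank {N U : Submodule K V} [FiniteDimensional K U] (h : N ≤ U) :
    finrank K (U.map N.mkQ) + finrank K N = finrank K U := by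
  have hrange : LinearMap.range (N.mkQ ∘ₗ U.subtype) = U.map N.mkQ := by
    rw [LinearMap.range_comp, range_subtype]
  have hker : LinearMap.ker (N.mkQ ∘ₗ U.subtype) = N.comap U.subtype := by
    rw [LinearMap.ker_comp, ker_mkQ]
  rw [← hrange, ← (comapSubtypeEquivOfLe h).finrank_eq, ← hker]
  exact LinearMap.finrank_range_add_finrank_ker _

theorem finrank_add_finrank_eq_finrank_comap_mkQ [FiniteDimensional K V] (W₀ : Submodule K V)
    (W' : Submodule K (V ⧸ W₀)) :
    finrank K W' + finrank K W₀ = finrank K (W'.comap W₀.mkQ) := by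
  rw [← finrank_map_mkQ_add_finrank (le_comap_mkQ W₀ W'),
    map_comap_eq_of_surjective W₀.mkQ_surjective]

theorem map_mapQ_map_eq (f : V →ₗ[K] V₂) (W₀ : Submodule K V) (W' : Submodule K (V ⧸ W₀)) :
    W'.map (W₀.mapQ (W₀.map f) f (le_comap_map f W₀)) =
      ((W'.comap W₀.mkQ).map f).map (W₀.map f).mkQ := by
  conv_lhs => rw [← map_comap_eq_of_surjective W₀.mkQ_surjective W']
  rw [← map_comp, mapQ_mkQ, map_comp]

theorem finrank_map_mapQ_add_finrank [FiniteDimensional K V] (f : V →ₗ[K] V₂)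
    (W₀ : Submodule K V) (W' : Submodule K (V ⧸ W₀)) :
    finrank K (W'.map (W₀.mapQ (W₀.map f) f (le_comap_map f W₀))) + finrank K (W₀.map f) =
      finrank K ((W'.comap W₀.mkQ).map f) := by
  rw [map_mapQ_map_eq, finrank_map_mkQ_add_finrank (map_mono (le_comap_mkQ W₀ W'))]

end Submodule

theorem BL_polytope_quotient_general (K : Type*) [Field K] (m : ℕ)
    (V : Type*) [AddCommGroup V] [Module K V] [FiniteDimensional K V]
    (Vj : Fin m → Type*) [∀ j, AddCommGroup (Vj j)] [∀ j, Module K (Vj j)]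
    (B : ∀ j : Fin m, V →ₗ[K] Vj j)
    (p : Fin m → ℝ)
    (hQ : ∀ W : Submodule K V,
      ∑ j, p j * (Module.finrank K (W.map (B j)) : ℝ) ≤ Module.finrank K W)
    (W₀ : Submodule K V)
    (hW₀ : ∑ j, p j * (Module.finrank K (W₀.map (B j)) : ℝ) = Module.finrank K W₀) :
    ∀ W' : Submodule K (V ⧸ W₀),
      ∑ j, p j * (Module.finrank K (W'.map
        (Submodule.mapQ W₀ (W₀.map (B j)) (B j)
          (Submodule.le_comap_map (B j) W₀))) : ℝ)
        ≤ Module.finrank K W' := by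
  intro W'
  set W := W'.comap W₀.mkQ
  have hdim : (finrank K W' : ℝ) = finrank K W - finrank K W₀ := by
    rw [← W₀.finrank_add_finrank_eq_finrank_comap_mkQ W']
    push_cast
    ring
  have hdim_j (j : Fin m) :
      (finrank K (W'.map (W₀.mapQ (W₀.map (B j)) (B j) (Submodule.le_comap_map (B j) W₀))) : ℝ) =
        finrank K (W.map (B j)) - finrank K (W₀.map (B j)) := by
    rw [← Submodule.finrank_map_mapQ_add_finrank (B j) W₀ W']
    push_cast
    ring
  simp only [hdim_j, mul_sub, Finset.sum_sub_distrib]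
  linarith [hQ W]

theorem BL_polytope_quotient (K : Type*) [Field K] (m : ℕ)
    (V : Type*) [AddCommGroup V] [Module K V] [FiniteDimensional K V]
    (Vj : Fin m → Type*) [∀ j, AddCommGroup (Vj j)] [∀ j, Module K (Vj j)]
    [∀ j, FiniteDimensional K (Vj j)]
    (B : ∀ j : Fin m, V →ₗ[K] Vj j)
    (p : Fin m → ℝ) (hp0 : ∀ j, 0 ≤ p j) (hp1 : ∀ j, p j ≤ 1)
    (hQ : ∀ W : Submodule K V,
      ∑ j, p j * (Module.finrank K (W.map (B j)) : ℝ) ≤ Module.finrank K W)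
    (htop : ∑ j, p j * (Module.finrank K ((⊤ : Submodule K V).map (B j)) : ℝ)
      = Module.finrank K V)
    (W₀ : Submodule K V)
    (hW₀ : ∑ j, p j * (Module.finrank K (W₀.map (B j)) : ℝ) = Module.finrank K W₀) :
    ∀ W' : Submodule K (V ⧸ W₀),
      ∑ j, p j * (Module.finrank K (W'.map
        (Submodule.mapQ W₀ (W₀.map (B j)) (B j)
          (Submodule.le_comap_map (B j) W₀))) : ℝ)
        ≤ Module.finrank K W' :=
  BL_polytope_quotient_general K m V Vj B p hQ W₀ hW₀
end

section
/- Let V be a finite-dimensional vector space, B_j : V → V_j linear maps, and p ∈ [0,1]^m with ∑_j p_j dim(B_j V) = dim V and dim W ≥ ∑_j p_j dim(B_j W) for all subspaces W. If p is an extreme point of this polytope and no nontrivial proper subspace W satisfies dim W = ∑_j p_j dim(B_j W), then p ∈ {0,1}^m. -/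
/-!
An extreme point `p` of `Q` admits no direction `v` with `p ± t v ∈ Q` for small `t > 0`. When no
proper nontrivial subspace is critical, the constraints indexed by such subspaces are strict at `p`,
and they take only finitely many distinct forms (they depend on `W` only through `dim W` and the
ranks `dim B_j W`). Hence every direction supported on the fractional coordinates that keeps the
constraint at `V` tight is feasible. This forces `dim B_j V > 0` for every fractional coordinate
`j`, and it leaves at most one fractional coordinate. If `p_j` is the only one, testing the
constraint on a line `L` with `B_j L ≠ 0` shows `p_j + p_l ≤ 1` whenever `B_l L ≠ 0` as well, so
`B_l = 0` whenever `p_l = 1` (such lines span `V`). Then `∑ p_l dim B_l V = p_j dim B_j V < dim V`.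
-/

open Module Filter Topology Matrix

lemma eq_zero_of_eventually_add_smul_mem_of_mem_extremePoints {E : Type*} [AddCommGroup E]
    [Module ℝ E] {A : Set E} {p v : E} (hp : p ∈ A.extremePoints ℝ)
    (h : ∀ᶠ t : ℝ in 𝓝 0, p + t • v ∈ A) : v = 0 := by
  have hneg : ∀ᶠ t : ℝ in 𝓝 0, p - t • v ∈ A := by
    simpa [sub_eq_add_neg] using (continuous_neg.tendsto' (0 : ℝ) 0 neg_zero).eventually h
  obtain ⟨t, ⟨hadd, hsub⟩, ht⟩ :=
    ((h.and hneg).filter_mono nhdsWithin_le_nhds |>.and self_mem_nhdsWithin).exists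
      (f := 𝓝[≠] (0 : ℝ))
  have htv : t • v = 0 := sub_eq_self.mp (hp.2 hsub hadd (mem_openSegment_sub_add p (t • v)))
  exact (smul_eq_zero.mp htv).resolve_left ht

lemma Filter.eventually_all_of_finite_range {α ι β : Type*} {l : Filter α} {φ : ι → β}
    (hφ : (Set.range φ).Finite) {P : α → ι → Prop} (hP : ∀ a i j, φ i = φ j → P a i → P a j)
    (h : ∀ i, ∀ᶠ a in l, P a i) : ∀ᶠ a in l, ∀ i, P a i := by
  have : ∀ᶠ a in l, ∀ b ∈ Set.range φ, ∀ i, φ i = b → P a i := by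
    refine (eventually_all_finite hφ).2 ?_
    rintro _ ⟨i, rfl⟩
    exact (h i).mono fun a ha j hj => hP a i j hj.symm ha
  exact this.mono fun a ha i => ha _ ⟨i, rfl⟩ i rfl

lemma LinearMap.eq_zero_of_forall_apply_ne_zero {R M N P : Type*} [Semiring R]
    [AddCommMonoid M] [AddCommMonoid N] [AddCommMonoid P] [Module R M] [Module R N] [Module R P]
    {f : M →ₗ[R] N} {g : M →ₗ[R] P} (hf : f ≠ 0) (h : ∀ v, f v ≠ 0 → g v = 0) : g = 0 := by
  obtain ⟨u, hu⟩ := DFunLike.ne_iff.mp hf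
  ext v
  by_cases hv : f v = 0
  · have hvu : f (v + u) ≠ 0 := by simpa [hv] using hu
    simpa [h u hu] using h _ hvu
  · exact h v hv

section BrascampLieb

variable {K V : Type*} [Field K] [AddCommGroup V] [Module K V] {m : ℕ} {Vj : Fin m → Type*}
  [∀ j, AddCommGroup (Vj j)] [∀ j, Module K (Vj j)] (B : ∀ j, V →ₗ[K] Vj j)

noncomputable def rankVector (W : Submodule K V) : Fin m → ℝ := fun j => finrank K (W.map (B j))

def blPolytope : Set (Fin m → ℝ) :=
  {q | (∀ j, 0 ≤ q j ∧ q j ≤ 1) ∧ (∀ W : Submodule K V, q ⬝ᵥ rankVector B W ≤ finrank K W) ∧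
    q ⬝ᵥ rankVector B ⊤ = finrank K V}

@[simp]
lemma rankVector_bot : rankVector B ⊥ = 0 := by
  ext j
  simp [rankVector]

lemma finite_range_finrank_rankVector [FiniteDimensional K V] :
    (Set.range fun W : Submodule K V => (finrank K W, rankVector B W)).Finite := by
  set n := finrank K V
  refine (((Set.finite_Iic n).prod (Set.Finite.pi fun _ => Set.finite_Iic n)).image
    fun r : ℕ × (Fin m → ℕ) => (r.1, fun j => (r.2 j : ℝ))).subset ?_
  rintro _ ⟨W, rfl⟩
  exact ⟨(finrank K W, fun j => finrank K (W.map (B j))),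
    ⟨W.finrank_le, fun j _ => ((W.finrank_map_le (B j)).trans W.finrank_le)⟩, rfl⟩

variable {B}

lemma eventually_add_smul_mem_blPolytope [FiniteDimensional K V] {p v : Fin m → ℝ}
    (hp : p ∈ blPolytope B)
    (hcrit : ∀ W : Submodule K V, W ≠ ⊥ → W ≠ ⊤ → p ⬝ᵥ rankVector B W ≠ finrank K W)
    (hv : ∀ j, v j ≠ 0 → p j ∈ Set.Ioo 0 1) (hvtop : v ⬝ᵥ rankVector B ⊤ = 0) :
    ∀ᶠ t : ℝ in 𝓝 0, p + t • v ∈ blPolytope B := by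
  obtain ⟨hbox, hle, htop⟩ := hp
  have hline : ∀ r : Fin m → ℝ, Tendsto (fun t : ℝ => (p + t • v) ⬝ᵥ r) (𝓝 0) (𝓝 (p ⬝ᵥ r)) := by
    intro r
    simpa [add_dotProduct] using
      ((continuous_id.mul continuous_const).const_add (p ⬝ᵥ r)).tendsto' 0 _ (by simp)
  have htop' : ∀ t : ℝ, (p + t • v) ⬝ᵥ rankVector B ⊤ = finrank K V := by
    simp [add_dotProduct, smul_dotProduct, hvtop, htop]
  have hbox' : ∀ᶠ t : ℝ in 𝓝 0, ∀ j, 0 ≤ (p + t • v) j ∧ (p + t • v) j ≤ 1 := by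
    refine eventually_all.2 fun j => ?_
    by_cases hj : v j = 0
    · simp [hj, hbox j]
    · obtain ⟨h0, h1⟩ := hv j hj
      have hcoord : Tendsto (fun t : ℝ => (p + t • v) j) (𝓝 0) (𝓝 (p j)) := by
        simpa using ((continuous_id.mul continuous_const).const_add (p j)).tendsto' 0 _ (by simp)
      exact ((hcoord.eventually (lt_mem_nhds h0)).and (hcoord.eventually (gt_mem_nhds h1))).mono
        fun t ht => ⟨ht.1.le, ht.2.le⟩
  have hle' : ∀ᶠ t : ℝ in 𝓝 0, ∀ W : Submodule K V,
      (p + t • v) ⬝ᵥ rankVector B W ≤ finrank K W := by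
    refine eventually_all_of_finite_range (finite_range_finrank_rankVector B) ?_ fun W => ?_
    · intro t W W' h hW
      obtain ⟨hfinrank, hrank⟩ := Prod.mk.inj h
      rwa [← hfinrank, ← hrank]
    by_cases hbot : W = ⊥
    · simp [hbot]
    by_cases htop : W = ⊤
    · subst htop
      simp [htop']
    exact (hline _).eventually (ge_mem_nhds ((hle W).lt_of_ne (hcrit W hbot htop)))
  exact (hbox'.and hle').mono fun t ht => ⟨ht.1, ht.2, htop' t⟩

lemma eq_zero_of_mem_extremePoints_blPolytope [FiniteDimensional K V] {p v : Fin m → ℝ}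
    (hp : p ∈ (blPolytope B).extremePoints ℝ)
    (hcrit : ∀ W : Submodule K V, W ≠ ⊥ → W ≠ ⊤ → p ⬝ᵥ rankVector B W ≠ finrank K W)
    (hv : ∀ j, v j ≠ 0 → p j ∈ Set.Ioo 0 1) (hvtop : v ⬝ᵥ rankVector B ⊤ = 0) : v = 0 :=
  eq_zero_of_eventually_add_smul_mem_of_mem_extremePoints hp
    (eventually_add_smul_mem_blPolytope hp.1 hcrit hv hvtop)

lemma rankVector_top_ne_zero [FiniteDimensional K V] {p : Fin m → ℝ}
    (hp : p ∈ (blPolytope B).extremePoints ℝ)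
    (hcrit : ∀ W : Submodule K V, W ≠ ⊥ → W ≠ ⊤ → p ⬝ᵥ rankVector B W ≠ finrank K W)
    {j : Fin m} (hj : p j ∈ Set.Ioo 0 1) : rankVector B ⊤ j ≠ 0 := by
  intro hzero
  have hsingle : (Pi.single j 1 : Fin m → ℝ) = 0 := by
    refine eq_zero_of_mem_extremePoints_blPolytope hp hcrit (fun i hi => ?_) ?_
    · obtain rfl : i = j := by by_contra h; simp [h] at hi
      exact hj
    · rw [single_dotProduct, hzero, mul_zero]
  simpa using congrFun hsingle j

lemma eq_of_mem_Ioo_of_mem_Ioo [FiniteDimensional K V] {p : Fin m → ℝ}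
    (hp : p ∈ (blPolytope B).extremePoints ℝ)
    (hcrit : ∀ W : Submodule K V, W ≠ ⊥ → W ≠ ⊤ → p ⬝ᵥ rankVector B W ≠ finrank K W)
    {j k : Fin m} (hj : p j ∈ Set.Ioo 0 1) (hk : p k ∈ Set.Ioo 0 1) : j = k := by
  by_contra hjk
  set d := rankVector B ⊤
  -- moving weight from `k` to `j` in the ratio `d k : d j` keeps the constraint at `⊤` tight
  have hzero : (Pi.single j (d k) - Pi.single k (d j) : Fin m → ℝ) = 0 := by
    refine eq_zero_of_mem_extremePoints_blPolytope hp hcrit (fun i hi => ?_) ?_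
    · by_cases hij : i = j
      · exact hij ▸ hj
      by_cases hik : i = k
      · exact hik ▸ hk
      simp [hij, hik] at hi
    · rw [sub_dotProduct, single_dotProduct, single_dotProduct, mul_comm, sub_self]
  have := congrFun hzero k
  simp [Ne.symm hjk] at this
  exact rankVector_top_ne_zero hp hcrit hj this

lemma add_le_one_of_apply_ne_zero {p : Fin m → ℝ} (hp : p ∈ blPolytope B) {j l : Fin m}
    (hjl : j ≠ l) {u : V} (hj : B j u ≠ 0) (hl : B l u ≠ 0) : p j + p l ≤ 1 := by
  have hu : u ≠ 0 := by rintro rfl; simp at hj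
  have hline : ∀ i, B i u ≠ 0 → rankVector B (K ∙ u) i = 1 := by
    intro i hi
    rw [rankVector, Submodule.map_span, Set.image_singleton, finrank_span_singleton hi,
      Nat.cast_one]
  calc p j + p l = p j * rankVector B (K ∙ u) j + p l * rankVector B (K ∙ u) l := by
        rw [hline j hj, hline l hl, mul_one, mul_one]
    _ ≤ p ⬝ᵥ rankVector B (K ∙ u) :=
        Finset.add_le_sum (f := fun i => p i * rankVector B (K ∙ u) i)
          (fun i _ => mul_nonneg (hp.1 i).1 (Nat.cast_nonneg _)) (Finset.mem_univ j)
          (Finset.mem_univ l) hjl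
    _ ≤ 1 := by simpa [finrank_span_singleton hu] using hp.2.1 (K ∙ u)

lemma eq_zero_of_apply_eq_one {p : Fin m → ℝ} (hp : p ∈ blPolytope B) {j l : Fin m}
    (hjl : j ≠ l) (hj : 0 < p j) (hBj : B j ≠ 0) (hl : p l = 1) : B l = 0 :=
  LinearMap.eq_zero_of_forall_apply_ne_zero hBj fun u hu => by
    by_contra hlu
    linarith [add_le_one_of_apply_ne_zero hp hjl hu hlu]

lemma mem_Ioo_of_ne_zero_of_ne_one {p : Fin m → ℝ} (hp : p ∈ blPolytope B) {j : Fin m}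
    (h0 : p j ≠ 0) (h1 : p j ≠ 1) : p j ∈ Set.Ioo 0 1 :=
  ⟨(hp.1 j).1.lt_of_ne' h0, (hp.1 j).2.lt_of_ne h1⟩

lemma mul_rankVector_top_eq_zero_of_ne [FiniteDimensional K V] {p : Fin m → ℝ}
    (hp : p ∈ (blPolytope B).extremePoints ℝ)
    (hcrit : ∀ W : Submodule K V, W ≠ ⊥ → W ≠ ⊤ → p ⬝ᵥ rankVector B W ≠ finrank K W)
    {j l : Fin m} (hj : p j ∈ Set.Ioo 0 1) (hlj : l ≠ j) : p l * rankVector B ⊤ l = 0 := by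
  by_cases hl0 : p l = 0
  · rw [hl0, zero_mul]
  by_cases hl1 : p l = 1
  · have hBj : B j ≠ 0 := by
      intro h
      simpa [rankVector, h] using rankVector_top_ne_zero hp hcrit hj
    simp [rankVector, eq_zero_of_apply_eq_one hp.1 (Ne.symm hlj) hj.1 hBj hl1]
  · exact absurd (eq_of_mem_Ioo_of_mem_Ioo hp hcrit (mem_Ioo_of_ne_zero_of_ne_one hp.1 hl0 hl1) hj)
      hlj

end BrascampLieb

theorem BL_extreme_point_zero_one_general (K : Type*) [Field K] (m : ℕ)
    (V : Type*) [AddCommGroup V] [Module K V] [FiniteDimensional K V]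
    (Vj : Fin m → Type*) [∀ j, AddCommGroup (Vj j)] [∀ j, Module K (Vj j)]
    (B : ∀ j : Fin m, V →ₗ[K] Vj j)
    (Q : Set (Fin m → ℝ))
    (hQdef : Q = {q | (∀ j, 0 ≤ q j ∧ q j ≤ 1) ∧
      (∀ W : Submodule K V,
        ∑ j, q j * (Module.finrank K (W.map (B j)) : ℝ) ≤ Module.finrank K W) ∧
      ∑ j, q j * (Module.finrank K ((⊤ : Submodule K V).map (B j)) : ℝ)
        = Module.finrank K V})
    (p : Fin m → ℝ) (hp : p ∈ Q.extremePoints ℝ)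
    (hcrit : ∀ W : Submodule K V, W ≠ ⊥ → W ≠ ⊤ →
      ∑ j, p j * (Module.finrank K (W.map (B j)) : ℝ) ≠ Module.finrank K W) :
    ∀ j, p j = 0 ∨ p j = 1 := by
  subst hQdef
  change p ∈ (blPolytope B).extremePoints ℝ at hp
  by_contra! hfrac
  obtain ⟨j, hj0, hj1⟩ := hfrac
  have hj := mem_Ioo_of_ne_zero_of_ne_one hp.1 hj0 hj1
  have hdj : 0 < rankVector B ⊤ j :=
    (Nat.cast_nonneg _).lt_of_ne' (rankVector_top_ne_zero hp hcrit hj)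
  have hdle : rankVector B ⊤ j ≤ finrank K V :=
    Nat.cast_le.mpr <| ((⊤ : Submodule K V).finrank_map_le (B j)).trans (Submodule.finrank_le _)
  have hsum : p ⬝ᵥ rankVector B ⊤ = p j * rankVector B ⊤ j :=
    Finset.sum_eq_single j (fun l _ hlj => mul_rankVector_top_eq_zero_of_ne hp hcrit hj hlj)
      (by simp)
  have hlt : p j * rankVector B ⊤ j < finrank K V := (mul_lt_of_lt_one_left hdj hj.2).trans_le hdle
  exact hlt.ne (hsum ▸ hp.1.2.2)

theorem BL_extreme_point_zero_one (K : Type*) [Field K] (m : ℕ)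
    (V : Type*) [AddCommGroup V] [Module K V] [FiniteDimensional K V]
    (Vj : Fin m → Type*) [∀ j, AddCommGroup (Vj j)] [∀ j, Module K (Vj j)]
    [∀ j, FiniteDimensional K (Vj j)]
    (B : ∀ j : Fin m, V →ₗ[K] Vj j)
    (Q : Set (Fin m → ℝ))
    (hQdef : Q = {q | (∀ j, 0 ≤ q j ∧ q j ≤ 1) ∧
      (∀ W : Submodule K V,
        ∑ j, q j * (Module.finrank K (W.map (B j)) : ℝ) ≤ Module.finrank K W) ∧
      ∑ j, q j * (Module.finrank K ((⊤ : Submodule K V).map (B j)) : ℝ)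
        = Module.finrank K V})
    (p : Fin m → ℝ) (hp : p ∈ Q.extremePoints ℝ)
    (hcrit : ∀ W : Submodule K V, W ≠ ⊥ → W ≠ ⊤ →
      ∑ j, p j * (Module.finrank K (W.map (B j)) : ℝ) ≠ Module.finrank K W) :
    ∀ j, p j = 0 ∨ p j = 1 :=
  BL_extreme_point_zero_one_general K m V Vj B Q hQdef p hp hcrit
end
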